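/- arXiv:2602.21258 — 2 statements merged into one kernel-verified Lean document; each statement's English description precedes it below -/
import Mathlib

section
/- For X ∈ 𝒫_J and t ∈ ℝ, the matrix (X^{-1})^t_J equals (X^t_J)^{-1}. -/
open Matrix
open scoped ComplexOrder

noncomputable def sigJ (p q : ℕ) : Matrix (Fin p ⊕ Fin q) (Fin p ⊕ Fin q) ℂ :=
  Matrix.fromBlocks 1 0 0 (-1)

/-- Real power of a matrix via the continuous functional calculus; for a positive definite
matrix this is the usual power. -/
noncomputable def mpow {p q : ℕ} (A : Matrix (Fin p ⊕ Fin q) (Fin p ⊕ Fin q) ℂ) (t : ℝ) :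
    Matrix (Fin p ⊕ Fin q) (Fin p ⊕ Fin q) ℂ :=
  cfc (fun x : ℝ => x ^ t) A

/-- The J-power `X^t_J := J·(J X)^t`. -/
noncomputable def Jpow {p q : ℕ} (X : Matrix (Fin p ⊕ Fin q) (Fin p ⊕ Fin q) ℂ) (t : ℝ) :
    Matrix (Fin p ⊕ Fin q) (Fin p ⊕ Fin q) ℂ :=
  sigJ p q * mpow (sigJ p q * X) t

/-! With `A := J X` we have `X = J A` and `J X⁻¹ = J A⁻¹ J`. Conjugation by the self-adjoint
unitary `J` is a star-algebra automorphism, so it commutes with the continuous functional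
calculus: `(J X⁻¹)^t = J (A⁻¹)^t J`. Since `A` has positive spectrum, `(x⁻¹)^t = (x^t)⁻¹`
there, so `(A⁻¹)^t = (A^t)⁻¹`. Hence `(X⁻¹)^t_J = (A^t)⁻¹ J = (J A^t)⁻¹ = (X^t_J)⁻¹`. -/

lemma continuousOn_rpow_const_spectrum {A : Type*} [Ring A] [Algebra ℝ A] {a : A}
    (ha : IsUnit a) (t : ℝ) : ContinuousOn (fun x : ℝ => x ^ t) (spectrum ℝ a) :=
  continuousOn_id.rpow_const fun _ hx =>
    Or.inl fun h => (spectrum.zero_notMem_iff ℝ).2 ha (h ▸ hx)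

section RealPower

variable {A : Type*} [Ring A] [StarRing A] [TopologicalSpace A] [Algebra ℝ A]
  [ContinuousFunctionalCalculus ℝ A IsSelfAdjoint]

lemma cfc_rpow_ringInverse [ContinuousMap.UniqueHom ℝ A] {a : A} (ha : IsSelfAdjoint a)
    (hspec : ∀ x ∈ spectrum ℝ a, 0 < x) (t : ℝ) :
    cfc (fun x : ℝ => x ^ t) (Ring.inverse a) =
      Ring.inverse (cfc (fun x : ℝ => x ^ t) a) := by
  have hunit : IsUnit a := (spectrum.zero_notMem_iff ℝ).1 fun h => (hspec 0 h).false
  have hinv : ContinuousOn (·⁻¹) (spectrum ℝ a) :=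
    continuousOn_inv₀.mono fun x hx => (hspec x hx).ne'
  have hpow : ContinuousOn (· ^ t) ((·⁻¹) '' spectrum ℝ a) := continuousOn_id.rpow_const <| by
    rintro _ ⟨x, hx, rfl⟩
    exact Or.inl (inv_ne_zero (hspec x hx).ne')
  rw [← cfc_ringInverse_id (R := ℝ) a hunit, ← cfc_comp' _ _ a hpow hinv,
    ← cfc_inv _ a (fun x hx => (Real.rpow_pos_of_pos (hspec x hx) t).ne')
      (continuousOn_rpow_const_spectrum hunit t)]
  exact cfc_congr fun x hx => Real.inv_rpow (hspec x hx).le t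

lemma cfc_unitary_conj [IsTopologicalRing A] [ContinuousMap.UniqueHom ℝ A] (f : ℝ → ℝ)
    {a u : A} (hu : u ∈ unitary A) (ha : IsSelfAdjoint a) (hf : ContinuousOn f (spectrum ℝ a)) :
    cfc f (u * a * star u) = u * cfc f a * star u :=
  (StarAlgHomClass.map_cfc (Unitary.conjStarAlgAut ℝ A ⟨u, hu⟩) f a hf
    (by show Continuous fun x => u * x * star u; fun_prop) ha
    (by simpa using ha.conjugate u)).symm

end RealPower

lemma Matrix.PosDef.pos_of_mem_spectrum {𝕜 n : Type*} [RCLike 𝕜] [Fintype n] [DecidableEq n]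
    {A : Matrix n n 𝕜} (hA : A.PosDef) {x : ℝ} (hx : x ∈ spectrum ℝ A) : 0 < x := by
  rw [hA.isHermitian.spectrum_real_eq_range_eigenvalues] at hx
  obtain ⟨i, rfl⟩ := hx
  exact hA.eigenvalues_pos i

section SigJ

variable {p q : ℕ}

lemma sigJ_mul_self : sigJ p q * sigJ p q = 1 := by
  simp [sigJ, fromBlocks_multiply, ← fromBlocks_one]

lemma sigJ_inv : (sigJ p q)⁻¹ = sigJ p q :=
  inv_eq_right_inv sigJ_mul_self

lemma star_sigJ : star (sigJ p q) = sigJ p q := by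
  simp [sigJ, star_eq_conjTranspose, fromBlocks_conjTranspose]

lemma sigJ_mem_unitary : sigJ p q ∈ unitary (Matrix (Fin p ⊕ Fin q) (Fin p ⊕ Fin q) ℂ) := by
  simp only [Unitary.mem_iff, star_sigJ, sigJ_mul_self, and_self]

lemma mpow_inv {A : Matrix (Fin p ⊕ Fin q) (Fin p ⊕ Fin q) ℂ} (hA : A.PosDef) (t : ℝ) :
    mpow A⁻¹ t = (mpow A t)⁻¹ := by
  simp only [mpow, nonsing_inv_eq_ringInverse]
  exact cfc_rpow_ringInverse hA.isHermitian (fun _ => hA.pos_of_mem_spectrum) t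

lemma mpow_sigJ_conj {A : Matrix (Fin p ⊕ Fin q) (Fin p ⊕ Fin q) ℂ} (hA : A.IsHermitian)
    (hunit : IsUnit A) (t : ℝ) :
    mpow (sigJ p q * A * sigJ p q) t = sigJ p q * mpow A t * sigJ p q := by
  simpa only [mpow, star_sigJ] using cfc_unitary_conj _ sigJ_mem_unitary hA
    (continuousOn_rpow_const_spectrum hunit t)

end SigJ

theorem stmt12_general (p q : ℕ) (X : Matrix (Fin p ⊕ Fin q) (Fin p ⊕ Fin q) ℂ)
    (hpos : (sigJ p q * X).PosDef) (t : ℝ) :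
    Jpow X⁻¹ t = (Jpow X t)⁻¹ := by
  unfold Jpow
  set J := sigJ p q
  set A := J * X
  have hX : X = J * A := by rw [← mul_assoc, sigJ_mul_self, one_mul]
  have hJXinv : J * X⁻¹ = J * A⁻¹ * J := by
    rw [hX, Matrix.mul_inv_rev, sigJ_inv, ← mul_assoc]
  calc J * mpow (J * X⁻¹) t = J * (J * mpow A⁻¹ t * J) := by
        rw [hJXinv, mpow_sigJ_conj hpos.inv.isHermitian hpos.inv.isUnit]
    _ = (mpow A t)⁻¹ * J := by
        rw [← mul_assoc, ← mul_assoc, sigJ_mul_self, one_mul, mpow_inv hpos]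
    _ = (J * mpow A t)⁻¹ := by rw [Matrix.mul_inv_rev, sigJ_inv]

/-- For `X ∈ 𝒫_J` and `t ∈ ℝ`, `(X⁻¹)^t_J = (X^t_J)⁻¹`. -/
theorem stmt12 (p q : ℕ) (X : Matrix (Fin p ⊕ Fin q) (Fin p ⊕ Fin q) ℂ)
    (hX : Xᴴ = sigJ p q * X * sigJ p q) (hpos : (sigJ p q * X).PosDef) (t : ℝ) :
    Jpow X⁻¹ t = (Jpow X t)⁻¹ :=
  stmt12_general p q X hpos t
end

section
/- For A, B ∈ 𝒫_J, the J-geometric mean A ♯^J B := A^{1/2}_J • (A^{-1/2}_J • B • A^{-1/2}_J)^{1/2}_J • A^{1/2}_J lies in 𝒫_J and is the unique solution X ∈ 𝒫_J of the Riccati-type equation X A^{-1} X = B. -/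
/-!
Left multiplication by the involution `J` identifies `𝒫_J` with the positive definite matrices
and `J`-powers with ordinary powers. It turns `A ♯^J B` into `J (JA ♯ JB)` and the equation
`X A⁻¹ X = B` into `(JX)(JA)⁻¹(JX) = JB`, so everything reduces to the classical geometric mean
`a ♯ b = a^{1/2} (a^{-1/2} b a^{-1/2})^{1/2} a^{1/2}`. It solves `x a⁻¹ x = b`, and any strictly
positive solution `x` has `(a^{-1/2} x a^{-1/2})² = a^{-1/2} b a^{-1/2}`, hence equals `a ♯ b` by
uniqueness of positive square roots.
-/

open Matrix
open scoped ComplexOrder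

/-- The J-geometric mean `A ♯^J B = A^{1/2}_J • (A^{-1/2}_J • B • A^{-1/2}_J)^{1/2}_J • A^{1/2}_J`
(where `X • Y = X J Y`). -/
noncomputable def sharpJ {p q : ℕ} (A B : Matrix (Fin p ⊕ Fin q) (Fin p ⊕ Fin q) ℂ) :
    Matrix (Fin p ⊕ Fin q) (Fin p ⊕ Fin q) ℂ :=
  Jpow A (1 / 2) * sigJ p q *
    Jpow (Jpow A (-(1 / 2)) * sigJ p q * B * sigJ p q * Jpow A (-(1 / 2))) (1 / 2) *
    sigJ p q * Jpow A (1 / 2)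

namespace CFC

variable {A : Type*} [PartialOrder A] [Ring A] [StarRing A] [TopologicalSpace A]
  [StarOrderedRing A] [Algebra ℝ A] [ContinuousFunctionalCalculus ℝ A IsSelfAdjoint]
  [NonnegSpectrumClass ℝ A]

noncomputable def geomMean (a b : A) : A :=
  a ^ (1 / 2 : ℝ) * (a ^ (-(1 / 2) : ℝ) * b * a ^ (-(1 / 2) : ℝ)) ^ (1 / 2 : ℝ) * a ^ (1 / 2 : ℝ)

variable {a b x : A}

lemma _root_.IsStrictlyPositive.geomMean (ha : IsStrictlyPositive a) (hb : IsStrictlyPositive b) :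
    IsStrictlyPositive (geomMean a b) := by
  unfold CFC.geomMean
  cfc_tac

lemma rpow_neg_half_mul_self (ha : IsStrictlyPositive a) :
    a ^ (-(1 / 2) : ℝ) * a ^ (-(1 / 2) : ℝ) = Ring.inverse a := by
  rw [← rpow_add ha.isUnit, inverse_eq_rpow_neg_one]
  norm_num

lemma rpow_half_mul_self (ha : IsStrictlyPositive a) :
    a ^ (1 / 2 : ℝ) * a ^ (1 / 2 : ℝ) = a := by
  rw [← rpow_add ha.isUnit]
  norm_num [rpow_one a ha.nonneg]

lemma rpow_half_mul_mul_rpow_neg_half (ha : IsStrictlyPositive a) (x : A) :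
    a ^ (1 / 2 : ℝ) * (a ^ (-(1 / 2) : ℝ) * x * a ^ (-(1 / 2) : ℝ)) * a ^ (1 / 2 : ℝ) = x := by
  have hhm : a ^ (1 / 2 : ℝ) * a ^ (-(1 / 2) : ℝ) = 1 := rpow_mul_rpow_neg _ ha
  have hmh : a ^ (-(1 / 2) : ℝ) * a ^ (1 / 2 : ℝ) = 1 := rpow_neg_mul_rpow _ ha
  simp only [mul_assoc]
  rw [hmh, mul_one, ← mul_assoc, hhm, one_mul]

lemma geomMean_mul_inverse_mul_geomMean (ha : IsStrictlyPositive a) (hb : IsStrictlyPositive b) :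
    geomMean a b * Ring.inverse a * geomMean a b = b := by
  have hinv := rpow_half_mul_mul_rpow_neg_half ha 1
  rw [mul_one] at hinv
  have hs := rpow_half_mul_self (a := a ^ (-(1 / 2) : ℝ) * b * a ^ (-(1 / 2) : ℝ)) (by cfc_tac)
  conv_rhs => rw [← rpow_half_mul_mul_rpow_neg_half ha b]
  rw [geomMean, ← rpow_neg_half_mul_self ha]
  set h := a ^ (1 / 2 : ℝ)
  set m := a ^ (-(1 / 2) : ℝ)
  set s := (m * b * m) ^ (1 / 2 : ℝ)
  calc h * s * h * (m * m) * (h * s * h) = h * s * (h * (m * m) * h) * s * h := by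
        simp only [mul_assoc]
    _ = h * (m * b * m) * h := by rw [hinv, mul_one, mul_assoc h, hs]

section Unique

variable [IsSemitopologicalRing A] [T2Space A]

lemma eq_geomMean_of_mul_inverse_mul_eq (ha : IsStrictlyPositive a) (hx : IsStrictlyPositive x)
    (h : x * Ring.inverse a * x = b) : x = geomMean a b := by
  rw [← h, ← rpow_neg_half_mul_self ha]
  set m := a ^ (-(1 / 2) : ℝ)
  have hy : m * (x * (m * m) * x) * m = (m * x * m) * (m * x * m) := by simp only [mul_assoc]
  have hsqrt : (m * (x * (m * m) * x) * m) ^ (1 / 2 : ℝ) = m * x * m := by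
    rw [← sqrt_eq_rpow, hy, sqrt_mul_self _ (by cfc_tac)]
  rw [geomMean, hsqrt, rpow_half_mul_mul_rpow_neg_half ha]

end Unique

end CFC

open scoped MatrixOrder

lemma mul_mul_inv_mul_of_mul_self_eq_one {n R : Type*} [Fintype n] [DecidableEq n] [CommRing R]
    {J : Matrix n n R} (hJ : J * J = 1) (X A Y : Matrix n n R) :
    J * X * (J * A)⁻¹ * (J * Y) = J * (X * A⁻¹ * Y) := by
  rw [Matrix.mul_inv_rev, Matrix.inv_eq_right_inv hJ]
  simp only [mul_assoc, ← mul_assoc J J, hJ, one_mul]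

section SignatureMatrix

variable {p q : ℕ}

local notation "J" => sigJ p q

lemma sigJ_mul_sigJ : J * J = 1 := by
  simp [sigJ, Matrix.fromBlocks_multiply, ← Matrix.fromBlocks_one]

lemma sigJ_mul_sigJ_mul (X : Matrix (Fin p ⊕ Fin q) (Fin p ⊕ Fin q) ℂ) :
    J * (J * X) = X := by
  rw [← mul_assoc, sigJ_mul_sigJ, one_mul]

lemma conjTranspose_sigJ : (J)ᴴ = J := by
  simp [sigJ, Matrix.fromBlocks_conjTranspose]

lemma Jpow_eq_sigJ_mul_rpow {X : Matrix (Fin p ⊕ Fin q) (Fin p ⊕ Fin q) ℂ}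
    (hX : 0 ≤ J * X) (t : ℝ) : Jpow X t = J * (J * X) ^ t := by
  rw [Jpow, mpow, ← CFC.rpow_eq_cfc_real hX]

lemma sharpJ_eq_sigJ_mul_geomMean {A B : Matrix (Fin p ⊕ Fin q) (Fin p ⊕ Fin q) ℂ}
    (hA : 0 ≤ J * A) (hB : 0 ≤ J * B) :
    sharpJ A B = J * CFC.geomMean (J * A) (J * B) := by
  have hmid : Jpow A (-(1 / 2)) * J * B * J * Jpow A (-(1 / 2)) =
      J * ((J * A) ^ (-(1 / 2) : ℝ) * (J * B) * (J * A) ^ (-(1 / 2) : ℝ)) := by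
    rw [Jpow_eq_sigJ_mul_rpow hA]
    simp only [mul_assoc, sigJ_mul_sigJ_mul]
  have hmid_nonneg : 0 ≤ J * (Jpow A (-(1 / 2)) * J * B * J * Jpow A (-(1 / 2))) := by
    rw [hmid, sigJ_mul_sigJ_mul]
    cfc_tac
  rw [sharpJ, Jpow_eq_sigJ_mul_rpow hmid_nonneg, hmid, sigJ_mul_sigJ_mul,
    Jpow_eq_sigJ_mul_rpow hA, CFC.geomMean]
  simp only [mul_assoc, sigJ_mul_sigJ_mul]

end SignatureMatrix

theorem stmt17_general (p q : ℕ) (A B : Matrix (Fin p ⊕ Fin q) (Fin p ⊕ Fin q) ℂ)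
    (hposA : (sigJ p q * A).PosDef)
    (hposB : (sigJ p q * B).PosDef) :
    ((sharpJ A B)ᴴ = sigJ p q * sharpJ A B * sigJ p q ∧ (sigJ p q * sharpJ A B).PosDef) ∧
    sharpJ A B * A⁻¹ * sharpJ A B = B ∧
    (∀ X : Matrix (Fin p ⊕ Fin q) (Fin p ⊕ Fin q) ℂ,
      Xᴴ = sigJ p q * X * sigJ p q → (sigJ p q * X).PosDef →
      X * A⁻¹ * X = B → X = sharpJ A B) := by
  have hA := hposA.isStrictlyPositive
  have hB := hposB.isStrictlyPositive
  have hG := hA.geomMean hB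
  have hJ : IsUnit (sigJ p q) := IsUnit.of_mul_eq_one _ sigJ_mul_sigJ
  have hconj := mul_mul_inv_mul_of_mul_self_eq_one (sigJ_mul_sigJ (p := p) (q := q))
  rw [sharpJ_eq_sigJ_mul_geomMean hA.nonneg hB.nonneg]
  refine ⟨⟨?_, ?_⟩, ?_, fun X _ hX hXAX => ?_⟩
  · rw [Matrix.conjTranspose_mul, conjTranspose_sigJ, hG.posDef.isHermitian.eq,
      sigJ_mul_sigJ_mul]
  · rw [sigJ_mul_sigJ_mul]
    exact hG.posDef
  · refine hJ.mul_left_cancel ?_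
    rw [← hconj, sigJ_mul_sigJ_mul, Matrix.nonsing_inv_eq_ringInverse,
      CFC.geomMean_mul_inverse_mul_geomMean hA hB]
  · have hric : sigJ p q * X * Ring.inverse (sigJ p q * A) * (sigJ p q * X) = sigJ p q * B := by
      rw [← Matrix.nonsing_inv_eq_ringInverse, hconj, hXAX]
    rw [← sigJ_mul_sigJ_mul X, CFC.eq_geomMean_of_mul_inverse_mul_eq hA hX.isStrictlyPositive hric]

/-- For `A, B ∈ 𝒫_J`, the J-geometric mean lies in `𝒫_J` and is the unique solution in `𝒫_J`
of the Riccati-type equation `X A⁻¹ X = B`. -/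
theorem stmt17 (p q : ℕ) (A B : Matrix (Fin p ⊕ Fin q) (Fin p ⊕ Fin q) ℂ)
    (hA : Aᴴ = sigJ p q * A * sigJ p q) (hposA : (sigJ p q * A).PosDef)
    (hB : Bᴴ = sigJ p q * B * sigJ p q) (hposB : (sigJ p q * B).PosDef) :
    ((sharpJ A B)ᴴ = sigJ p q * sharpJ A B * sigJ p q ∧ (sigJ p q * sharpJ A B).PosDef) ∧
    sharpJ A B * A⁻¹ * sharpJ A B = B ∧
    (∀ X : Matrix (Fin p ⊕ Fin q) (Fin p ⊕ Fin q) ℂ,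
      Xᴴ = sigJ p q * X * sigJ p q → (sigJ p q * X).PosDef →
      X * A⁻¹ * X = B → X = sharpJ A B) :=
  stmt17_general p q A B hposA hposB
end
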